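/- For a simplicial complex T on a finite set E with support E', one has χ̃(T̄∨) = (−1)^{#E − #E'} χ̃(T∨), and consequently −χ̃(T) = (−1)^{#E'}χ̃(T∨) = (−1)^{#E}χ̃(T̄∨) (when E' ≠ ∅). -/

import Mathlib

open Finset

variable {A : Type} [DecidableEq A]

/-- The support `E' = {e ∈ E | {e} ∈ T}` of a simplicial complex `T` on `E`. -/
def suppT (E : Finset A) (T : Finset (Finset A)) : Finset A :=
  E.filter (fun e => {e} ∈ T)

/-- The Alexander dual `T∨ = {J ⊆ E' | E' \ J ∉ T}`. -/
def alexDual (E : Finset A) (T : Finset (Finset A)) : Finset (Finset A) :=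
  (suppT E T).powerset.filter (fun J => suppT E T \ J ∉ T)

/-- The relative Alexander dual `T̄∨ = {L ⊆ E | E \ L ∉ T}`. -/
def relAlexDual (E : Finset A) (T : Finset (Finset A)) : Finset (Finset A) :=
  E.powerset.filter (fun L => E \ L ∉ T)

/-- Reduced Euler characteristic `χ̃(T) = ∑_{J ∈ T} (-1)^{#J - 1}`. -/
def chiC (T : Finset (Finset A)) : ℤ := ∑ J ∈ T, (-1) ^ (J.card + 1)

/-!
Both duals are instances of one construction: for a complex `T` on a nonempty ground set `S`,
the sets `L ⊆ S` split according to whether `S \ L` lies in `T`. The whole powerset has reduced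
Euler characteristic `0`, and complementation `L ↦ S \ L` matches the part with `S \ L ∈ T` with
`T` itself up to the sign `(-1)^#S`; hence the dual on `S` has characteristic `-(-1)^#S χ̃(T)`.
Taking `S = E'` (which carries `T` because `T` is closed under subsets) and `S = E` gives the
three identities.
-/

omit [DecidableEq A] in
lemma chiC_powerset_of_nonempty {S : Finset A} (hS : S.Nonempty) : chiC S.powerset = 0 := by
  simp only [chiC, pow_succ, ← sum_mul, sum_powerset_neg_one_pow_card_of_nonempty hS, zero_mul]

omit [DecidableEq A] in
lemma chiC_filter_add_chiC_filter_not (T : Finset (Finset A)) (p : Finset A → Prop)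
    [DecidablePred p] : chiC (T.filter p) + chiC (T.filter (fun J => ¬ p J)) = chiC T :=
  sum_filter_add_sum_filter_not T p _

lemma neg_one_pow_card_succ_eq_of_subset {S L : Finset A} (hLS : L ⊆ S) :
    (-1 : ℤ) ^ (#L + 1) = (-1) ^ #S * (-1) ^ (#(S \ L) + 1) := by
  have hsq : ((-1 : ℤ) ^ #(S \ L)) * (-1) ^ #(S \ L) = 1 := pow_mul_pow_eq_one _ (by norm_num)
  rw [← card_sdiff_add_card_eq_card hLS]
  linear_combination (-1 : ℤ) ^ #L * hsq

lemma chiC_filter_sdiff_mem {S : Finset A} {T : Finset (Finset A)} (hTS : ∀ J ∈ T, J ⊆ S) :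
    chiC (S.powerset.filter (fun L => S \ L ∈ T)) = (-1) ^ #S * chiC T := by
  rw [chiC, chiC, mul_sum]
  refine sum_nbij' (fun L => S \ L) (fun K => S \ K) ?_ ?_ ?_ ?_ ?_
  · intro L hL
    exact (mem_filter.1 hL).2
  · intro K hK
    simpa [Finset.sdiff_sdiff_eq_self (hTS K hK)] using hK
  · intro L hL
    exact Finset.sdiff_sdiff_eq_self (mem_powerset.1 (mem_filter.1 hL).1)
  · intro K hK
    exact Finset.sdiff_sdiff_eq_self (hTS K hK)
  · intro L hL
    exact neg_one_pow_card_succ_eq_of_subset (mem_powerset.1 (mem_filter.1 hL).1)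

theorem chiC_filter_sdiff_not_mem {S : Finset A} {T : Finset (Finset A)} (hS : S.Nonempty)
    (hTS : ∀ J ∈ T, J ⊆ S) :
    chiC (S.powerset.filter (fun L => S \ L ∉ T)) = -((-1) ^ #S * chiC T) := by
  have hsplit := chiC_filter_add_chiC_filter_not S.powerset (fun L => S \ L ∈ T)
  rw [chiC_filter_sdiff_mem hTS, chiC_powerset_of_nonempty hS] at hsplit
  linear_combination hsplit

lemma subset_suppT {E : Finset A} {T : Finset (Finset A)} (hTE : ∀ J ∈ T, J ⊆ E)
    (hT : ∀ J ∈ T, ∀ K ⊆ J, K ∈ T) {J : Finset A} (hJ : J ∈ T) : J ⊆ suppT E T :=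
  fun e he => mem_filter.2 ⟨hTE J hJ he, hT J hJ {e} (singleton_subset_iff.2 he)⟩

/-- For a simplicial complex `T` on `E` with nonempty support `E'`,
`χ̃(T̄∨) = (-1)^{#E - #E'} χ̃(T∨)`, and consequently
`-χ̃(T) = (-1)^{#E'} χ̃(T∨) = (-1)^{#E} χ̃(T̄∨)`. -/
theorem chi_relAlexDual
    (E : Finset A) (T : Finset (Finset A))
    (hTE : ∀ J ∈ T, J ⊆ E) (hT : ∀ J ∈ T, ∀ K ⊆ J, K ∈ T)
    (hsupp : (suppT E T).Nonempty) :
    chiC (relAlexDual E T) = (-1) ^ (E.card - (suppT E T).card) * chiC (alexDual E T) ∧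
    - chiC T = (-1) ^ (suppT E T).card * chiC (alexDual E T) ∧
    - chiC T = (-1) ^ E.card * chiC (relAlexDual E T) := by
  have hsuppE : suppT E T ⊆ E := filter_subset _ _
  have hdual : chiC (alexDual E T) = -((-1) ^ #(suppT E T) * chiC T) :=
    chiC_filter_sdiff_not_mem hsupp fun J hJ => subset_suppT hTE hT hJ
  have hrel : chiC (relAlexDual E T) = -((-1) ^ #E * chiC T) :=
    chiC_filter_sdiff_not_mem (hsupp.mono hsuppE) hTE
  have hpow : (-1 : ℤ) ^ (#E - #(suppT E T)) * (-1) ^ #(suppT E T) = (-1) ^ #E := by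
    rw [← pow_add, Nat.sub_add_cancel (card_le_card hsuppE)]
  have hsq (n : ℕ) : (-1 : ℤ) ^ n * (-1) ^ n = 1 := pow_mul_pow_eq_one n (by norm_num)
  refine ⟨?_, ?_, ?_⟩
  · linear_combination hrel - (-1) ^ (#E - #(suppT E T)) * hdual + chiC T * hpow
  · linear_combination -(-1) ^ #(suppT E T) * hdual + chiC T * hsq (#(suppT E T))
  · linear_combination -(-1) ^ #E * hrel + chiC T * hsq (#E)
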